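/- There is an isomorphism of abelian groups ℤ/8 × ℤ/2 ≅ W(ℤ/8) sending (1, 0) to the class of [1] and (0, 1) to the class of ⟨⟨5⟩⟩ = [1] − [5]. -/

import Mathlib

noncomputable section

/-- The subgroup of squares of units of a commutative ring. -/
def squareUnits (R : Type) [CommRing R] : Subgroup Rˣ :=
  (powMonoidHom 2 : Rˣ →* Rˣ).range

/-- The group of square classes `Rˣ/(Rˣ)²`. -/
def SqCl (R : Type) [CommRing R] : Type := Rˣ ⧸ squareUnits R

instance (R : Type) [CommRing R] : CommGroup (SqCl R) :=
  QuotientGroup.Quotient.commGroup (squareUnits R)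

/-- The square class `[a]` of a unit `a`. -/
def cls {R : Type} [CommRing R] (a : Rˣ) : SqCl R := QuotientGroup.mk a

/-- The group ring `ℤ[Rˣ/(Rˣ)²]`. -/
abbrev GRing (R : Type) [CommRing R] := MonoidAlgebra ℤ (SqCl R)

/-- The generator `[a]` of the group ring, for a unit `a`. -/
def gen {R : Type} [CommRing R] (a : Rˣ) : GRing R :=
  MonoidAlgebra.of ℤ (SqCl R) (cls a)

/-- The set of relations defining the Grothendieck–Witt ring of a (connected semi-)local ring:
`([a₁]+[a₂]+[a₃]+[a₄]) − ([b₁]+[b₂]+[b₃]+[b₄])` whenever there exists `P ∈ GL₄(R)` with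
`P ⬝ diag(a₁,…,a₄) ⬝ Pᵀ = diag(b₁,…,b₄)`. -/
def gwRel (R : Type) [CommRing R] : Set (GRing R) :=
  {x | ∃ (a b : Fin 4 → Rˣ) (P : Matrix (Fin 4) (Fin 4) R),
    IsUnit P.det ∧
    P * Matrix.diagonal (fun i => (a i : R)) * P.transpose =
      Matrix.diagonal (fun i => (b i : R)) ∧
    x = (∑ i, gen (a i)) - (∑ i, gen (b i))}

/-- The (symmetric) Grothendieck–Witt ring of `R`, presented à la Knebusch–Rosenberg–Ware. -/
abbrev GW (R : Type) [CommRing R] := GRing R ⧸ Ideal.span (gwRel R)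

/-- The class `[a] ∈ GW(R)` of a unit `a`. -/
def gw {R : Type} [CommRing R] (a : Rˣ) : GW R :=
  Ideal.Quotient.mk (Ideal.span (gwRel R)) (gen a)

/-- The (symmetric) Witt ring of `R` : the quotient of `GW(R)` by the ideal generated by the
hyperbolic element `[1] + [-1]`. -/
abbrev Wr (R : Type) [CommRing R] := GW R ⧸ Ideal.span {gw (R := R) 1 + gw (-1)}

/-- The class in the Witt ring of a unit `a`. -/
def wcl {R : Type} [CommRing R] (a : Rˣ) : Wr R :=
  Ideal.Quotient.mk (Ideal.span {gw (R := R) 1 + gw (-1)}) (gw a)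

/-!
Over `ℤ/8` every unit squares to `1`, so `W(ℤ/8)` is additively generated by `[1], [3], [5], [7]`,
and `[-u] = -[u]` because `[1] + [-1] = 0`. Two explicit congruences of diagonal forms,
`4⟨1⟩ ≅ 4⟨-1⟩` and `4⟨1⟩ ≅ ⟨5, 5, 1, 1⟩`, give `8[1] = 0` and `2⟨⟨5⟩⟩ = 0`, so
`(x, y) ↦ x[1] + y⟨⟨5⟩⟩` is a well-defined surjection `ℤ/8 × ℤ/2 → W(ℤ/8)`.

For injectivity, congruent unit diagonal forms `⟨a_i⟩ ≅ ⟨b_i⟩` over `ℤ/8` have the same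
determinant (as `(det P)² = 1`) and the same `∑ a_i`: the quadratic Gauss sum
`∑_x e^{2πi q(x)/8}` is a congruence invariant, and for a diagonal form it equals
`4ⁿ e^{2πi (∑ a_i)/8}`. Since `u ↦ χ₄(u) - u ∈ {0, 4}` is a homomorphism `(ℤ/8)ˣ → ℤ/8`, these
two invariants also fix `∑ χ₄(a_i)`, so `[u] ↦ (u, χ₄(u))` defines a ring map `W(ℤ/8) → ℤ/8 × ℤ/8`. It sends
`[1] ↦ (1, 1)` and `⟨⟨5⟩⟩ ↦ (4, 0)`, which generate a subgroup `ℤ/8 × ℤ/2`.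
-/

open Matrix

lemma AddChar.map_sum_eq_prod {A M ι : Type*} [AddCommMonoid A] [CommMonoid M] (ψ : AddChar A M)
    (s : Finset ι) (f : ι → A) : ψ (∑ i ∈ s, f i) = ∏ i ∈ s, ψ (f i) := by
  classical
  induction s using Finset.induction_on with
  | empty => simp
  | insert i s hi ih => rw [Finset.sum_insert hi, Finset.prod_insert hi, map_add_eq_mul, ih]

section MultiplesHom

variable {A : Type*} [AddCommGroup A] {n : ℕ} (a : A) (h : n • a = 0)

def ZMod.multiplesHom : ZMod n →+ A :=
  ZMod.lift n ⟨zmultiplesHom A a, by simpa using h⟩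

lemma ZMod.multiplesHom_apply [NeZero n] (x : ZMod n) : ZMod.multiplesHom a h x = x.val • a := by
  conv_lhs => rw [← ZMod.intCast_zmod_cast x]
  rw [ZMod.multiplesHom, ZMod.lift_coe, zmultiplesHom_apply, ZMod.cast_eq_val, natCast_zsmul]

lemma ZMod.multiplesHom_one : ZMod.multiplesHom a h 1 = a := by
  rw [← Int.cast_one, ZMod.multiplesHom, ZMod.lift_coe]
  exact one_zsmul a

end MultiplesHom

lemma isUnit_det_of_mul_diagonal_mul_transpose {R n : Type*} [CommRing R] [Fintype n]
    [DecidableEq n] {a b : n → Rˣ} {P : Matrix n n R}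
    (h : P * diagonal (fun i => (a i : R)) * Pᵀ = diagonal (fun i => (b i : R))) :
    IsUnit P.det := by
  have hdet := congrArg det h
  rw [det_mul, det_mul, det_transpose, det_diagonal, det_diagonal, mul_right_comm] at hdet
  have hb : IsUnit (∏ i, (b i : R)) := IsUnit.prod_univ_iff.mpr fun i => (b i).isUnit
  exact isUnit_of_mul_isUnit_left (isUnit_of_mul_isUnit_left (hdet ▸ hb))

section GaussSum

variable {R S n : Type*} [CommRing R] [Fintype R] [CommRing S] [Fintype n] [DecidableEq n]

def quadGaussSum (ψ : AddChar R S) (M : Matrix n n R) : S :=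
  ∑ x : n → R, ψ (x ⬝ᵥ M *ᵥ x)

lemma quadGaussSum_congr (ψ : AddChar R S) (M : Matrix n n R) {P : Matrix n n R}
    (hP : IsUnit P.det) : quadGaussSum ψ (P * M * Pᵀ) = quadGaussSum ψ M := by
  let := (Pᵀ).invertibleOfIsUnitDet (by rwa [det_transpose])
  refine Fintype.sum_equiv (Pᵀ.toLinearEquiv' this).toEquiv _ _ fun x => ?_
  rw [← mulVec_mulVec, ← mulVec_mulVec, dotProduct_mulVec, ← mulVec_transpose]
  rfl

lemma quadGaussSum_diagonal (ψ : AddChar R S) (c : n → R) :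
    quadGaussSum ψ (diagonal c) = ∏ i, ∑ t, ψ (c i * t ^ 2) := by
  rw [Fintype.prod_sum]
  refine Finset.sum_congr rfl fun x _ => ?_
  rw [dotProduct, ← ψ.map_sum_eq_prod]
  simp only [mulVec_diagonal]
  congr! 2 with i
  ring

end GaussSum

section Witt

variable {R : Type} [CommRing R]

lemma gen_one : gen (1 : Rˣ) = 1 := map_one (MonoidAlgebra.of ℤ (SqCl R))

lemma gen_mul (a b : Rˣ) : gen (a * b) = gen a * gen b :=
  map_mul (MonoidAlgebra.of ℤ (SqCl R)) (cls a) (cls b)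

def toWr : GRing R →+* Wr R := (Ideal.Quotient.mk _).comp (Ideal.Quotient.mk _)

lemma toWr_gen (a : Rˣ) : toWr (gen a) = wcl a := rfl

lemma toWr_surjective : Function.Surjective (toWr (R := R)) :=
  Ideal.Quotient.mk_surjective.comp Ideal.Quotient.mk_surjective

lemma wcl_one : wcl (1 : Rˣ) = 1 := by
  rw [← toWr_gen, gen_one, map_one]

lemma wcl_mul (a b : Rˣ) : wcl (a * b) = wcl a * wcl b := by
  simp only [← toWr_gen, gen_mul, map_mul]

lemma wcl_neg_one : wcl (-1 : Rˣ) = -1 := by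
  rw [eq_neg_iff_add_eq_zero, ← wcl_one, wcl, wcl, ← map_add, Ideal.Quotient.eq_zero_iff_mem,
    add_comm]
  exact Ideal.subset_span rfl

lemma wcl_neg (a : Rˣ) : wcl (-a) = -wcl a := by
  rw [← neg_one_mul a, wcl_mul, wcl_neg_one]
  ring

lemma sum_wcl_eq_of_congr_diagonal {a b : Fin 4 → Rˣ} (P : Matrix (Fin 4) (Fin 4) R)
    (h : P * diagonal (fun i => (a i : R)) * Pᵀ = diagonal (fun i => (b i : R))) :
    ∑ i, wcl (a i) = ∑ i, wcl (b i) := by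
  have hrel : (∑ i, gen (a i)) - ∑ i, gen (b i) ∈ Ideal.span (gwRel R) :=
    Ideal.subset_span ⟨a, b, P, isUnit_det_of_mul_diagonal_mul_transpose h, h, rfl⟩
  rw [← Ideal.Quotient.eq_zero_iff_mem, map_sub, sub_eq_zero] at hrel
  simp only [← toWr_gen, ← map_sum]
  exact congrArg (Ideal.Quotient.mk _) hrel

lemma closure_range_wcl : AddSubgroup.closure (Set.range (wcl (R := R))) = ⊤ := by
  rw [eq_top_iff]
  rintro z -
  obtain ⟨x, rfl⟩ := toWr_surjective z
  induction x using MonoidAlgebra.induction_on with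
  | of s =>
    obtain ⟨u, rfl⟩ := QuotientGroup.mk_surjective s
    exact AddSubgroup.subset_closure ⟨u, rfl⟩
  | add x y hx hy => simpa only [map_add] using add_mem hx hy
  | smul r x hx => simpa only [map_zsmul] using zsmul_mem hx r

variable {S : Type*} [Ring S] (χ : Rˣ →* S) (hsq : ∀ u, χ (u ^ 2) = 1) (hneg : χ (-1) = -1)
  (hrel : ∀ (a b : Fin 4 → Rˣ) (P : Matrix (Fin 4) (Fin 4) R),
    P * diagonal (fun i => (a i : R)) * Pᵀ = diagonal (fun i => (b i : R)) →
      ∑ i, χ (a i) = ∑ i, χ (b i))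

def Wr.liftChar : Wr R →+* S :=
  let f : GRing R →+* S := (MonoidAlgebra.lift ℤ S (SqCl R)
    (QuotientGroup.lift (squareUnits R) χ (by rintro _ ⟨u, rfl⟩; exact hsq u))).toRingHom
  have hf (u : Rˣ) : f (gen u) = χ u := MonoidAlgebra.lift_of _ _
  Ideal.Quotient.lift _
    (Ideal.Quotient.lift _ f fun x hx => by
      refine (Ideal.span_le (I := RingHom.ker f)).mpr ?_ hx
      rintro _ ⟨a, b, P, -, h, rfl⟩
      simp only [SetLike.mem_coe, RingHom.mem_ker, map_sub, map_sum, hf, hrel a b P h, sub_self])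
    fun x hx => by
      refine (Ideal.span_le (I := RingHom.ker _)).mpr ?_ hx
      rintro _ rfl
      rw [SetLike.mem_coe, RingHom.mem_ker, map_add]
      show f (gen 1) + f (gen (-1)) = 0
      rw [hf, hf, map_one, hneg, add_neg_cancel]

lemma Wr.liftChar_wcl (u : Rˣ) : Wr.liftChar χ hsq hneg hrel (wcl u) = χ u :=
  MonoidAlgebra.lift_of _ _

end Witt

namespace ZMod8

variable {n : Type*} [Fintype n] [DecidableEq n]

lemma unit_sq (u : (ZMod 8)ˣ) : u ^ 2 = 1 := by revert u; decide

lemma unit_mul_four (c : (ZMod 8)ˣ) : (c : ZMod 8) * 4 = 4 := by revert c; decide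

lemma sum_addChar_unit_mul_sq {S : Type*} [CommRing S] (ψ : AddChar (ZMod 8) S) (hψ : ψ 4 = -1)
    (c : (ZMod 8)ˣ) : ∑ t, ψ (c * t ^ 2) = 4 * ψ c := by
  have huniv : (Finset.univ : Finset (ZMod 8)) = {0, 1, 2, 3, 4, 5, 6, 7} := by decide
  simp +decide only [huniv, Finset.sum_insert, Finset.mem_insert, Finset.mem_singleton,
    Finset.sum_singleton]
  reduce_mod_char
  simp only [unit_mul_four, hψ, AddChar.map_zero_eq_one]
  ring

lemma stdAddChar_four : (ZMod.stdAddChar (N := 8)) (4 : ZMod 8) = -1 := by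
  have h : (ZMod.stdAddChar (N := 8)) (4 : ZMod 8) ^ 2 = 1 := by
    rw [← AddChar.map_nsmul_eq_pow]
    exact AddChar.map_zero_eq_one _
  have h1 : (ZMod.stdAddChar (N := 8)) (4 : ZMod 8) ≠ 1 := by
    rw [← AddChar.map_zero_eq_one (ZMod.stdAddChar (N := 8)),
      (ZMod.injective_stdAddChar (N := 8)).ne_iff]
    decide
  exact (sq_eq_one_iff.mp h).resolve_left h1

lemma sum_eq_of_congr_diagonal {a b : n → (ZMod 8)ˣ} {P : Matrix n n (ZMod 8)}
    (h : P * diagonal (fun i => (a i : ZMod 8)) * Pᵀ = diagonal (fun i => (b i : ZMod 8))) :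
    ∑ i, (a i : ZMod 8) = ∑ i, (b i : ZMod 8) := by
  have hG := quadGaussSum_congr ZMod.stdAddChar (diagonal fun i => (a i : ZMod 8))
    (isUnit_det_of_mul_diagonal_mul_transpose h)
  rw [h, quadGaussSum_diagonal, quadGaussSum_diagonal] at hG
  simp only [sum_addChar_unit_mul_sq _ stdAddChar_four, Finset.prod_mul_distrib,
    ← AddChar.map_sum_eq_prod] at hG
  exact ZMod.injective_stdAddChar (mul_left_cancel₀ (by simp) hG.symm)

lemma prod_eq_of_congr_diagonal {a b : n → (ZMod 8)ˣ} {P : Matrix n n (ZMod 8)}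
    (h : P * diagonal (fun i => (a i : ZMod 8)) * Pᵀ = diagonal (fun i => (b i : ZMod 8))) :
    ∏ i, a i = ∏ i, b i := by
  obtain ⟨u, hu⟩ := isUnit_det_of_mul_diagonal_mul_transpose h
  have hdet := congrArg det h
  rw [det_mul, det_mul, det_transpose, det_diagonal, det_diagonal, ← hu, mul_right_comm,
    ← Units.val_mul, ← sq, unit_sq, Units.val_one, one_mul] at hdet
  ext
  simpa only [Units.coe_prod] using hdet

def chi4 : (ZMod 8)ˣ →* (ZMod 8)ˣ where
  toFun u := if (u : ZMod 8) = 1 ∨ (u : ZMod 8) = 5 then 1 else -1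
  map_one' := by decide
  map_mul' := by decide

def chi4Defect (u : (ZMod 8)ˣ) : ZMod 8 := chi4 u - u

lemma chi4Defect_mul (u v : (ZMod 8)ˣ) : chi4Defect (u * v) = chi4Defect u + chi4Defect v := by
  revert u v; decide

lemma sum_chi4Defect {ι : Type*} (s : Finset ι) (a : ι → (ZMod 8)ˣ) :
    ∑ i ∈ s, chi4Defect (a i) = chi4Defect (∏ i ∈ s, a i) := by
  classical
  induction s using Finset.induction_on with
  | empty => simp only [Finset.sum_empty, Finset.prod_empty]; rfl
  | insert i s hi ih => rw [Finset.sum_insert hi, Finset.prod_insert hi, chi4Defect_mul, ih]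

lemma sum_chi4 {ι : Type*} (s : Finset ι) (a : ι → (ZMod 8)ˣ) :
    ∑ i ∈ s, (chi4 (a i) : ZMod 8) =
      ∑ i ∈ s, (a i : ZMod 8) + chi4Defect (∏ i ∈ s, a i) := by
  rw [← sum_chi4Defect, ← Finset.sum_add_distrib]
  simp only [chi4Defect, add_sub_cancel]

def wittChar : (ZMod 8)ˣ →* ZMod 8 × ZMod 8 :=
  (Units.coeHom (ZMod 8)).prod ((Units.coeHom (ZMod 8)).comp chi4)

def wittHom : Wr (ZMod 8) →+* ZMod 8 × ZMod 8 :=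
  Wr.liftChar wittChar (by simp [unit_sq]) (by decide) fun a b P h => by
    ext
    · simp only [wittChar, Prod.fst_sum, MonoidHom.prod_apply, Units.coeHom_apply]
      exact sum_eq_of_congr_diagonal h
    · simp only [wittChar, Prod.snd_sum, MonoidHom.prod_apply, MonoidHom.comp_apply,
        Units.coeHom_apply]
      rw [sum_chi4, sum_chi4, sum_eq_of_congr_diagonal h, prod_eq_of_congr_diagonal h]

lemma wittHom_wcl (u : (ZMod 8)ˣ) : wittHom (wcl u) = ((u : ZMod 8), (chi4 u : ZMod 8)) :=
  Wr.liftChar_wcl _ _ _ _ u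

def five : (ZMod 8)ˣ := ZMod.unitOfCoprime 5 (by decide)

lemma eight_smul_wcl_one : 8 • wcl (1 : (ZMod 8)ˣ) = 0 := by
  -- left multiplication by the quaternion `2 + i + j + k`, of norm `7 = -1`
  have h := sum_wcl_eq_of_congr_diagonal (R := ZMod 8) (a := fun _ => 1) (b := fun _ => -1)
    !![2, -1, -1, -1; 1, 2, -1, 1; 1, 1, 2, -1; 1, -1, 1, 2] (by decide)
  simp only [Finset.sum_const, Finset.card_univ, Fintype.card_fin, wcl_neg, smul_neg,
    eq_neg_iff_add_eq_zero, ← add_smul] at h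
  exact h

lemma two_smul_wcl_one_sub_wcl_five : 2 • (wcl 1 - wcl five) = 0 := by
  -- `1² + 2² = 5`
  have h := sum_wcl_eq_of_congr_diagonal (R := ZMod 8) (a := fun _ => 1) (b := ![five, five, 1, 1])
    !![1, -2, 0, 0; 2, 1, 0, 0; 0, 0, 1, 0; 0, 0, 0, 1] (by decide)
  simp only [Fin.sum_univ_four, Matrix.cons_val] at h
  rw [two_nsmul]
  linear_combination h

def toWitt : ZMod 8 × ZMod 2 →+ Wr (ZMod 8) :=
  (ZMod.multiplesHom (wcl 1) eight_smul_wcl_one).coprod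
    (ZMod.multiplesHom (wcl 1 - wcl five) two_smul_wcl_one_sub_wcl_five)

lemma toWitt_apply (x : ZMod 8) (y : ZMod 2) :
    toWitt (x, y) = x.val • wcl 1 + y.val • (wcl 1 - wcl five) := by
  simp only [toWitt, AddMonoidHom.coprod_apply, ZMod.multiplesHom_apply]

lemma toWitt_one_zero : toWitt (1, 0) = wcl 1 := by
  simp only [toWitt, AddMonoidHom.coprod_apply, ZMod.multiplesHom_one, map_zero, add_zero]

lemma toWitt_zero_one : toWitt (0, 1) = wcl 1 - wcl five := by
  simp only [toWitt, AddMonoidHom.coprod_apply, ZMod.multiplesHom_one, map_zero, zero_add]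

lemma toWitt_injective : Function.Injective toWitt := by
  rw [injective_iff_map_eq_zero]
  rintro ⟨x, y⟩ h
  have hsol : ∀ (x : ZMod 8) (y : ZMod 2),
      x.val • wittHom (wcl 1) + y.val • (wittHom (wcl 1) - wittHom (wcl five)) = 0 →
        (x, y) = 0 := by
    simp only [wittHom_wcl]
    decide
  refine hsol x y ?_
  rw [← map_nsmul, ← map_sub, ← map_nsmul, ← map_add, ← toWitt_apply, h, map_zero]

lemma toWitt_surjective : Function.Surjective toWitt := by
  rw [← AddMonoidHom.range_eq_top, eq_top_iff, ← closure_range_wcl, AddSubgroup.closure_le]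
  rintro _ ⟨u, rfl⟩
  have h1 : wcl (1 : (ZMod 8)ˣ) ∈ toWitt.range := ⟨(1, 0), toWitt_one_zero⟩
  have h5 : wcl five ∈ toWitt.range := by
    simpa using sub_mem h1 ⟨(0, 1), toWitt_zero_one⟩
  obtain rfl | rfl | rfl | rfl : u = 1 ∨ u = -1 ∨ u = five ∨ u = -five := by
    revert u; decide
  · exact h1
  · exact wcl_neg (1 : (ZMod 8)ˣ) ▸ neg_mem h1
  · exact h5
  · exact wcl_neg five ▸ neg_mem h5

end ZMod8

/-- `W(ℤ/8) ≅ ℤ/8 × ℤ/2` as abelian groups, via `(1,0) ↦ [1]` and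
`(0,1) ↦ ⟨⟨5⟩⟩ = [1] − [5]`. -/
theorem witt_zmod_eight :
    ∃ e : ZMod 8 × ZMod 2 ≃+ Wr (ZMod 8),
      e (1, 0) = wcl 1 ∧
      e (0, 1) = wcl 1 - wcl (ZMod.unitOfCoprime 5 (by decide)) :=
  ⟨AddEquiv.ofBijective ZMod8.toWitt ⟨ZMod8.toWitt_injective, ZMod8.toWitt_surjective⟩,
    ZMod8.toWitt_one_zero, ZMod8.toWitt_zero_one⟩

end
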